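/- arXiv:2509.14466 — 6 statements merged into one kernel-verified Lean document; each statement's English description precedes it below -/
import Mathlib

section
/- If all arms in a two-sided matching market share the same strict preference ordering over players (serial dictatorship on the arm side), and there are equal numbers M of players and arms with each player having a strict preference order over all arms, then there exists exactly one stable matching. -/
/-- A matching (bijection) `m` is stable if it admits no blocking pair: no player `i`
and arm `k ≠ m i` such that `i` prefers `k` to `m i` and `k` prefers `i` to `m⁻¹ k`. -/
def IsStableMatching {P A : Type*} (prefP : P → A → A → Prop)
    (prefA : A → P → P → Prop) (m : P ≃ A) : Prop :=
  ¬ ∃ (i : P) (k : A), k ≠ m i ∧ prefP i k (m i) ∧ prefA k i (m.symm k)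

/-!
Order matchings lexicographically, players ranked by the arms' common order `r` and each player
comparing arms by their own preference. If `(i, k)` blocks `m`, the holder `j` of `k` ranks below
`i`, so swapping the arms of `i` and `j` improves `m` at `i` and changes nothing at players ranked
above `i`: the swap is lexicographically smaller. Conversely, if `m'` is lexicographically smaller
than `m`, then at the first player `i` where they differ, `(i, m' i)` blocks `m`. Hence the stable
matchings are exactly the lexicographically minimal ones; the lexicographic order is well founded
and total, so there is exactly one.
-/

section

variable {P A : Type*} {prefP : P → A → A → Prop} {r : P → P → Prop}

theorem exists_lex_lt_of_not_isStableMatching [IsStrictOrder P r] {m : P ≃ A}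
    (hm : ¬ IsStableMatching prefP (fun _ => r) m) :
    ∃ m' : P ≃ A, Pi.Lex r (fun {i} => prefP i) m' m := by
  classical
  obtain ⟨i, k, hk, hprefer, hrank⟩ := not_not.mp hm
  refine ⟨m.trans (Equiv.swap (m i) k), i, fun j hji => ?_, by simpa using hprefer⟩
  have hji' : j ≠ i := fun h => irrefl_of r i (h ▸ hji)
  have hjk : m j ≠ k := fun h => asymm_of r hrank (by rwa [← h, m.symm_apply_apply])
  simp [Equiv.swap_apply_of_ne_of_ne (m.injective.ne hji') hjk]

theorem IsStableMatching.not_lex_lt [Std.Trichotomous r] [Std.Irrefl r]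
    [∀ i, Std.Irrefl (prefP i)] {m : P ≃ A} (hm : IsStableMatching prefP (fun _ => r) m)
    (m' : P ≃ A) : ¬ Pi.Lex r (fun {i} => prefP i) m' m := by
  rintro ⟨i, hagree, hprefer⟩
  have hk : m' i ≠ m i := fun h => irrefl_of (prefP i) (m i) (h ▸ hprefer)
  obtain ⟨j, hj⟩ : ∃ j, m j = m' i := ⟨_, m.apply_symm_apply _⟩
  refine hm ⟨i, m' i, hk, hprefer, ?_⟩
  rw [← hj, m.symm_apply_apply]
  rcases trichotomous_of r i j with hij | rfl | hji
  · exact hij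
  · exact absurd hj.symm hk
  · exact absurd (m'.injective ((hagree j hji).trans hj) ▸ hji) (irrefl_of r i)

theorem isStableMatching_iff_forall_not_lex_lt [IsStrictTotalOrder P r]
    [∀ i, Std.Irrefl (prefP i)] {m : P ≃ A} :
    IsStableMatching prefP (fun _ => r) m ↔ ∀ m' : P ≃ A, ¬ Pi.Lex r (fun {i} => prefP i) m' m :=
  ⟨IsStableMatching.not_lex_lt, fun h => by_contra fun hm =>
    let ⟨m', hlt⟩ := exists_lex_lt_of_not_isStableMatching hm; h m' hlt⟩

theorem existsUnique_isStableMatching [Finite P] [Finite A] [IsStrictTotalOrder P r]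
    [∀ i, IsStrictTotalOrder A (prefP i)] [Nonempty (P ≃ A)] :
    ∃! m : P ≃ A, IsStableMatching prefP (fun _ => r) m := by
  have hwf : WellFounded (InvImage (Pi.Lex r fun {i} => prefP i) (⇑) : (P ≃ A) → _ → Prop) :=
    InvImage.wf _ (Pi.Lex.wellFounded r fun _ => Finite.wellFounded_of_trans_of_irrefl _)
  obtain ⟨m, -, hmin⟩ := hwf.has_min Set.univ Set.univ_nonempty
  simp only [isStableMatching_iff_forall_not_lex_lt]
  refine ⟨m, fun m' => hmin m' trivial, fun m' hm' => DFunLike.coe_injective ?_⟩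
  have := Pi.trichotomous_lex r (fun {i} => prefP i) (Finite.wellFounded_of_trans_of_irrefl r)
  exact this.trichotomous _ _ (hmin m' trivial) (hm' m)

end

/-- With equally many players and arms, strict total player preferences, and
all arms sharing one strict total order over players (serial dictatorship on the arm side),
there exists exactly one stable matching. -/
theorem stmt_1 {P A : Type*} [Fintype P] [Fintype A]
    (hcard : Fintype.card P = Fintype.card A)
    (prefP : P → A → A → Prop) (hprefP : ∀ i, IsStrictTotalOrder A (prefP i))
    (r : P → P → Prop) (hr : IsStrictTotalOrder P r) :
    ∃! m : P ≃ A, IsStableMatching prefP (fun _ => r) m :=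
  have : Nonempty (P ≃ A) := ⟨Fintype.equivOfCardEq hcard⟩
  existsUnique_isStableMatching
end

section
/- Suppose a matching market with M players and M arms satisfies the sequential preference condition: there is an ordering of players p_1,...,p_M and arms a_1,...,a_M such that for each i, player p_i prefers a_i over all arms a_{i+1},...,a_M, and arm a_i prefers p_i over all players p_{i+1},...,p_M. Then the matching m(p_i) = a_i is the unique stable matching. -/
/-- Under the sequential preference condition (player `i` prefers arm `i` to
all later arms, arm `i` prefers player `i` to all later players), the diagonal matching
`m i = i` is the unique stable matching. -/
theorem stmt_2 (M : ℕ)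
    (prefP : Fin M → Fin M → Fin M → Prop)  -- prefP i a b : player i prefers arm a over arm b
    (prefA : Fin M → Fin M → Fin M → Prop)  -- prefA k i j : arm k prefers player i over player j
    (hprefP : ∀ i, IsStrictTotalOrder (Fin M) (prefP i))
    (hprefA : ∀ k, IsStrictTotalOrder (Fin M) (prefA k))
    (hSPCp : ∀ i j : Fin M, i < j → prefP i i j)
    (hSPCa : ∀ i j : Fin M, i < j → prefA i i j) :
    IsStableMatching prefP prefA (Equiv.refl (Fin M)) ∧
      (∀ m : Fin M ≃ Fin M, IsStableMatching prefP prefA m → m = Equiv.refl (Fin M)) := by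
  constructor
  · rintro ⟨i, k, hne, hp, ha⟩
    simp only [Equiv.refl_apply, Equiv.refl_symm] at hp ha hne
    rcases lt_or_gt_of_ne hne with h | h
    · exact (hprefA k).irrefl k ((hprefA k).trans _ _ _ (hSPCa k i h) ha)
    · exact (hprefP i).irrefl k ((hprefP i).trans _ _ _ hp (hSPCp i k h))
  · intro m hm
    have key2 : ∀ n : ℕ, ∀ i : Fin M, (i : ℕ) = n → m i = i := by
      intro n
      induction n using Nat.strong_induction_on with
      | _ n IH =>
        intro i hn
        subst hn
        have ih : ∀ j : Fin M, j < i → m j = j := fun j hj => IH j.val hj j rfl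
        by_contra hne
        have h1 : (i : Fin M) < m i := by
          rcases lt_trichotomy (m i) i with h | h | h
          · exact absurd (m.injective (ih (m i) h)) (Ne.symm (fun e => hne e.symm))
          · exact absurd h hne
          · exact h
        have h2 : (i : Fin M) < m.symm i := by
          rcases lt_trichotomy (m.symm i) i with h | h | h
          · have := ih (m.symm i) h
            rw [Equiv.apply_symm_apply] at this
            exact absurd this.symm (ne_of_lt h)
          · have hc := congrArg m h
            rw [Equiv.apply_symm_apply] at hc
            exact absurd hc.symm hne
          · exact h
        exact hm ⟨i, i, fun e => hne e.symm, hSPCp i (m i) h1, hSPCa i (m.symm i) h2⟩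
    exact Equiv.ext fun i => key2 i.val i rfl
end

section
/- Consider a single player facing K arms with distinct unit-variance Gaussian means μ_1 > μ_2 > ... > μ_K, with allocation proportions w_1,...,w_K > 0 summing to 1. Suppose for every challenger k ≥ 2 the index equality w_1·D(μ_1, x_k) + w_k·D(μ_k, x_k) = I holds with common value I > 0, where x_k = (w_1 μ_1 + w_k μ_k)/(w_1 + w_k) and D(a,b) = (a−b)²/2, and the anchor condition Σ_{k≥2} D(μ_1, x_k)/D(μ_k, x_k) = 1 holds. Then such a vector (w_1,...,w_K) with prescribed value of w_1 determines the remaining w_k uniquely: for each k ≥ 2, w_k is the unique positive solution of the index equality given w_1. -/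
/-- The index as a function of the challenger allocation simplifies to
`w0 * d^2/2 * t / (w0 + t)` where `d = μ0 - μk`. -/
lemma stmt_7_aux (a b t c : ℝ) (hc : 0 < c) (ht : 0 < t) :
    c * (a - (c * a + t * b) / (c + t)) ^ 2 / 2 +
      t * (b - (c * a + t * b) / (c + t)) ^ 2 / 2
      = c * (a - b) ^ 2 / 2 * (t / (c + t)) := by
  have h : c + t ≠ 0 := by positivity
  field_simp
  ring

/-- In the Gaussian best-arm-identification first-order system (index equalities
with common value `I > 0` and anchor condition), given the leader allocation `w 0`, each
challenger allocation `w k` is the unique positive solution of its index equality. -/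
theorem stmt_7 (K : ℕ) [NeZero K] (hK : 2 ≤ K) (μ w : Fin K → ℝ)
    (hμ : ∀ i j : Fin K, i < j → μ j < μ i)
    (hw : ∀ k, 0 < w k) (hsum : ∑ k, w k = 1) (I : ℝ) (hI : 0 < I)
    (hidx : ∀ k : Fin K, k ≠ 0 →
      w 0 * (μ 0 - (w 0 * μ 0 + w k * μ k) / (w 0 + w k)) ^ 2 / 2 +
        w k * (μ k - (w 0 * μ 0 + w k * μ k) / (w 0 + w k)) ^ 2 / 2 = I)
    (hanchor : ∑ k ∈ Finset.univ.filter (fun k : Fin K => k ≠ 0),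
      ((μ 0 - (w 0 * μ 0 + w k * μ k) / (w 0 + w k)) ^ 2 / 2) /
        ((μ k - (w 0 * μ 0 + w k * μ k) / (w 0 + w k)) ^ 2 / 2) = 1) :
    ∀ k : Fin K, k ≠ 0 → ∀ v : ℝ, 0 < v →
      w 0 * (μ 0 - (w 0 * μ 0 + v * μ k) / (w 0 + v)) ^ 2 / 2 +
        v * (μ k - (w 0 * μ 0 + v * μ k) / (w 0 + v)) ^ 2 / 2 = I →
      v = w k := by
  intro k hk v hv hveq
  have hkpos : (0 : Fin K) < k :=
    lt_of_le_of_ne (Fin.zero_le k) (Ne.symm hk)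
  have hμk : μ k < μ 0 := hμ 0 k hkpos
  have h0 : 0 < w 0 := hw 0
  have hwk : 0 < w k := hw k
  have hC : 0 < w 0 * (μ 0 - μ k) ^ 2 / 2 := by
    have : 0 < (μ 0 - μ k) ^ 2 := pow_pos (sub_pos.mpr hμk) 2
    positivity
  have h1 := (stmt_7_aux (μ 0) (μ k) v (w 0) h0 hv).symm.trans hveq
  have h2 := (stmt_7_aux (μ 0) (μ k) (w k) (w 0) h0 hwk).symm.trans (hidx k hk)
  have h3 : w 0 * (μ 0 - μ k) ^ 2 / 2 * (v / (w 0 + v))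
      = w 0 * (μ 0 - μ k) ^ 2 / 2 * (w k / (w 0 + w k)) := h1.trans h2.symm
  have h4 : v / (w 0 + v) = w k / (w 0 + w k) :=
    mul_left_cancel₀ (ne_of_gt hC) h3
  have hv0 : (0:ℝ) < w 0 + v := by linarith
  have hwk0 : (0:ℝ) < w 0 + w k := by linarith
  have h5 : v * (w 0 + w k) = w k * (w 0 + v) := by
    field_simp at h4
    linarith [h4]
  nlinarith [h5]
end

section
/- Let g : Λ → ℝ⁺ be a function on a nonempty set Λ ⊆ ℝ of positive reals, and suppose for each pair (i,k) in a finite index set S of size n there is a family of test martingales M^λ_{i,k}(t) ≥ exp(λ X_{i,k}(t) − g(λ)) such that for each λ ∈ Λ the product Π_{(i,k)∈S} M^λ_{i,k}(t) is a nonnegative martingale with initial expectation 1. Define C^g(x) = inf_{λ∈Λ} (g(λ)+x)/λ. Then for all x > 0, P(∃t ∈ ℕ : Σ_{(i,k)∈S} X_{i,k}(t) > n·C^g(x/n)) ≤ e^{−x}. -/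
open MeasureTheory
open scoped NNReal ENNReal

/-!
For a fixed `λ ∈ Λ`, the domination `M λ i t ≥ exp (λ Xᵢ(t) − g λ)` shows that
`Σᵢ Xᵢ(t) > n (g λ + x/n)/λ` forces the product martingale `∏ᵢ M λ i t` above `e^x`, which by
Ville's inequality (Doob's maximal inequality on every finite horizon) has probability at most
`e^{-x}`. Taking `λ` along a minimizing sequence of `(g λ + x/n)/λ` exhausts the event by an
increasing sequence of such events.
-/

namespace MeasureTheory

variable {Ω : Type*} {m0 : MeasurableSpace Ω} {μ : Measure Ω} {ℱ : Filtration ℕ m0}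
  {f : ℕ → Ω → ℝ}

theorem Martingale.integral_eq_integral_zero [IsFiniteMeasure μ] (hf : Martingale f ℱ μ) (t : ℕ) :
    ∫ ω, f t ω ∂μ = ∫ ω, f 0 ω ∂μ :=
  (integral_condExp (ℱ.le 0)).symm.trans (integral_congr_ae (hf.condExp_ae_eq t.zero_le))

theorem Martingale.ville_ineq [IsFiniteMeasure μ] (hf : Martingale f ℱ μ) (hnonneg : 0 ≤ f)
    (c : ℝ≥0) : c * μ {ω | ∃ t, (c : ℝ) ≤ f t ω} ≤ ENNReal.ofReal (∫ ω, f 0 ω ∂μ) := by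
  set B : ℕ → Set Ω := fun k =>
    {ω | (c : ℝ) ≤ (Finset.range (k + 1)).sup' Finset.nonempty_range_add_one fun j => f j ω}
  have hB_mono : Monotone B := fun a b hab ω (hω : (c : ℝ) ≤ _) =>
    hω.trans (Finset.sup'_mono _ (Finset.range_subset_range.2 (by omega)) _)
  have hcover : {ω | ∃ t, (c : ℝ) ≤ f t ω} ⊆ ⋃ k, B k := fun ω ⟨t, ht⟩ =>
    Set.mem_iUnion.2 ⟨t, ht.trans (Finset.le_sup' (fun j => f j ω) (Finset.self_mem_range_succ t))⟩
  have hB : ∀ k, c * μ (B k) ≤ ENNReal.ofReal (∫ ω, f 0 ω ∂μ) := fun k =>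
    calc c * μ (B k) ≤ ENNReal.ofReal (∫ ω in B k, f k ω ∂μ) :=
          maximal_ineq hf.submartingale hnonneg k
      _ ≤ ENNReal.ofReal (∫ ω, f k ω ∂μ) := ENNReal.ofReal_le_ofReal <|
          setIntegral_le_integral (hf.integrable k) (.of_forall (hnonneg k))
      _ = ENNReal.ofReal (∫ ω, f 0 ω ∂μ) := by rw [hf.integral_eq_integral_zero]
  calc c * μ {ω | ∃ t, (c : ℝ) ≤ f t ω} ≤ c * ⨆ k, μ (B k) := by
        rw [← hB_mono.measure_iUnion]; gcongr
    _ ≤ _ := by rw [ENNReal.mul_iSup]; exact iSup_le hB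

theorem Martingale.measure_exists_exp_le_le [IsFiniteMeasure μ] (hf : Martingale f ℱ μ)
    (hnonneg : 0 ≤ f) (hf0 : ∫ ω, f 0 ω ∂μ = 1) (x : ℝ) :
    μ {ω | ∃ t, Real.exp x ≤ f t ω} ≤ ENNReal.ofReal (Real.exp (-x)) := by
  have hville := hf.ville_ineq hnonneg (Real.exp x).toNNReal
  rw [Real.coe_toNNReal _ (Real.exp_pos x).le, hf0, ENNReal.ofReal_one] at hville
  rw [Real.exp_neg, ENNReal.ofReal_inv_of_pos (Real.exp_pos x), ENNReal.le_inv_iff_mul_le,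
    mul_comm]
  exact hville

end MeasureTheory

theorem exp_lt_prod_of_mul_lt_sum {ι : Type*} [Fintype ι] [Nonempty ι] {l G x : ℝ} (hl : 0 < l)
    {Y M : ι → ℝ} (hdom : ∀ i, Real.exp (l * Y i - G) ≤ M i)
    (hlt : Fintype.card ι * ((G + x / Fintype.card ι) / l) < ∑ i, Y i) :
    Real.exp x < ∏ i, M i := by
  have hn : (0 : ℝ) < Fintype.card ι := Nat.cast_pos.2 Fintype.card_pos
  have hx : x < ∑ i, (l * Y i - G) := by
    rw [Finset.sum_sub_distrib, ← Finset.mul_sum, Finset.sum_const, Finset.card_univ,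
      nsmul_eq_mul]
    have : Fintype.card ι * ((G + x / Fintype.card ι) / l) = (Fintype.card ι * G + x) / l := by
      field_simp
    rw [this, div_lt_iff₀ hl] at hlt
    linarith
  calc Real.exp x < Real.exp (∑ i, (l * Y i - G)) := Real.exp_lt_exp.2 hx
    _ = ∏ i, Real.exp (l * Y i - G) := Real.exp_sum _ _
    _ ≤ ∏ i, M i := Finset.prod_le_prod (fun i _ => (Real.exp_pos _).le) fun i _ => hdom i

/-- If for each `λ ∈ Λ` (a nonempty set of positive reals) there are
nonnegative test martingales `M λ i t ≥ exp(λ X_i(t) − g λ)` whose product over the finite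
index set is a martingale with initial expectation 1, then with
`C^g(x) = inf_{λ∈Λ} (g λ + x)/λ` and `n` the size of the index set, for every `x > 0`,
`P(∃ t, Σᵢ Xᵢ(t) > n · C^g(x/n)) ≤ e^{−x}`. -/
theorem stmt_10 {Ω ι : Type*} [Fintype ι] [Nonempty ι] {m0 : MeasurableSpace Ω}
    (μ : Measure Ω) [IsProbabilityMeasure μ] (ℱ : Filtration ℕ m0)
    (Λ : Set ℝ) (hΛ : Λ.Nonempty) (hΛpos : Λ ⊆ Set.Ioi 0)
    (g : ℝ → ℝ) (hg : ∀ l ∈ Λ, 0 ≤ g l)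
    (X : ι → ℕ → Ω → ℝ) (M : ℝ → ι → ℕ → Ω → ℝ)
    (hMnn : ∀ l ∈ Λ, ∀ i t ω, 0 ≤ M l i t ω)
    (hdom : ∀ l ∈ Λ, ∀ i t ω, Real.exp (l * X i t ω - g l) ≤ M l i t ω)
    (hmart : ∀ l ∈ Λ, Martingale (fun t ω => ∏ i, M l i t ω) ℱ μ)
    (hinit : ∀ l ∈ Λ, ∫ ω, (∏ i, M l i 0 ω) ∂μ = 1) :
    ∀ x : ℝ, 0 < x →
      μ {ω | ∃ t : ℕ, (Fintype.card ι : ℝ) *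
            sInf ((fun l => (g l + x / (Fintype.card ι : ℝ)) / l) '' Λ) < ∑ i, X i t ω}
        ≤ ENNReal.ofReal (Real.exp (-x)) := by
  intro x hx
  set n : ℝ := (Fintype.card ι : ℝ)
  set C : ℝ → ℝ := fun l => (g l + x / n) / l
  have hC_nonneg : ∀ l ∈ Λ, 0 ≤ C l := fun l hl =>
    div_nonneg (add_nonneg (hg l hl) (div_nonneg hx.le (Nat.cast_nonneg _))) (hΛpos hl).le
  obtain ⟨u, hu_anti, hu_lim, hu_mem⟩ :=
    exists_seq_tendsto_sInf (hΛ.image C) ⟨0, Set.forall_mem_image.2 hC_nonneg⟩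
  choose l hlΛ hlu using hu_mem
  set A : ℕ → Set Ω := fun k => {ω | ∃ t, n * u k < ∑ i, X i t ω}
  have hA_mono : Monotone A := fun a b hab ω ⟨t, ht⟩ =>
    ⟨t, lt_of_le_of_lt (by gcongr; exact hu_anti hab) ht⟩
  have hcover : {ω | ∃ t, n * sInf (C '' Λ) < ∑ i, X i t ω} ⊆ ⋃ k, A k := fun ω ⟨t, ht⟩ =>
    have ⟨k, hk⟩ := ((hu_lim.const_mul n).eventually_lt_const ht).exists
    Set.mem_iUnion.2 ⟨k, t, hk⟩
  have hA : ∀ k, A k ⊆ {ω | ∃ t, Real.exp x ≤ ∏ i, M (l k) i t ω} := fun k ω ⟨t, ht⟩ =>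
    ⟨t, (exp_lt_prod_of_mul_lt_sum (hΛpos (hlΛ k)) (fun i => hdom _ (hlΛ k) i t ω)
      (by rwa [← hlu] at ht)).le⟩
  calc μ {ω | ∃ t, n * sInf (C '' Λ) < ∑ i, X i t ω} ≤ μ (⋃ k, A k) := measure_mono hcover
    _ = ⨆ k, μ (A k) := hA_mono.measure_iUnion
    _ ≤ ENNReal.ofReal (Real.exp (-x)) := iSup_le fun k => (measure_mono (hA k)).trans <|
        (hmart _ (hlΛ k)).measure_exists_exp_le_le (fun t ω => Finset.prod_nonneg fun i _ =>
          hMnn _ (hlΛ k) i t ω) (hinit _ (hlΛ k)) x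
end

section
/- For a two-armed pure-exploration problem with fixed allocation fraction β ∈ (0,1) to the leader and optimal fraction β* ∈ (0,1), suppose the β-constrained characteristic value satisfies D_β(μ) ≥ max{β*/β, (1−β*)/(1−β)}^{-1}·D_{β*}(μ) for each player. Then for the multi-player problem with per-player fractions β_i and optima β_i*, the overall β̄-constrained value satisfies D_{β̄}(μ) ≥ (max_i max{β_i*/β_i, (1−β_i*)/(1−β_i)})^{-1}·D_{β̄*}(μ). In particular, taking β_i = 1/2 for all i, since β_i* ∈ (0,1) gives max{2β_i*, 2(1−β_i*)} ≤ 2, the 1/2-Top-Two allocation is 2-competitive: D_{1/2}(μ) ≥ D*(μ)/2. -/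
/-!
An allocation constraint that costs each player at most a factor `γᵢ` costs the max-min value at
most `maxᵢ γᵢ`: `Dbar` is monotone and positively homogeneous, so `Dstar ≤ (maxᵢ γᵢ) • Dp`
pointwise gives `Dbar Dstar ≤ (maxᵢ γᵢ) * Dbar Dp`. For `βᵢ = 1/2` every `γᵢ` is at most `2`.
-/

/-- `Dbar D` is the paper's `D_{β̄}(μ)` when `D i` is player `i`'s value `D_{pᵢ,βᵢ}(μ⁽ⁱ⁾)`. -/
noncomputable def Dbar {n : ℕ} (D : Fin n → ℝ) : ℝ :=
  sSup {v : ℝ | ∃ w : Fin n → ℝ,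
    (∀ i, 0 ≤ w i) ∧ (∑ i, w i = 1) ∧ v = ⨅ i, w i * D i}

section Dbar

variable {n : ℕ} {D D' : Fin n → ℝ}

theorem iInf_le_Dbar [NeZero n] {w : Fin n → ℝ} (hw0 : ∀ i, 0 ≤ w i) (hw1 : ∑ i, w i = 1) :
    ⨅ i, w i * D i ≤ Dbar D := by
  refine le_csSup ⟨|D 0|, ?_⟩ ⟨w, hw0, hw1, rfl⟩
  rintro v ⟨u, hu0, hu1, rfl⟩
  have hu : u 0 ≤ 1 := hu1 ▸ Finset.single_le_sum (fun i _ => hu0 i) (Finset.mem_univ 0)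
  calc ⨅ i, u i * D i ≤ u 0 * D 0 := ciInf_le (Set.finite_range _).bddBelow 0
    _ ≤ u 0 * |D 0| := mul_le_mul_of_nonneg_left (le_abs_self _) (hu0 0)
    _ ≤ |D 0| := mul_le_of_le_one_left (abs_nonneg _) hu

theorem Dbar_le [NeZero n] {b : ℝ}
    (h : ∀ w : Fin n → ℝ, (∀ i, 0 ≤ w i) → ∑ i, w i = 1 → ⨅ i, w i * D i ≤ b) :
    Dbar D ≤ b := by
  refine csSup_le ⟨_, Pi.single 0 1,
    (Pi.single_nonneg.2 zero_le_one : (0 : Fin n → ℝ) ≤ Pi.single 0 1), by simp, rfl⟩ ?_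
  rintro v ⟨w, hw0, hw1, rfl⟩
  exact h w hw0 hw1

theorem Dbar_nonneg [NeZero n] (hD : ∀ i, 0 ≤ D i) : 0 ≤ Dbar D :=
  have hw0 : ∀ i, 0 ≤ (Pi.single 0 1 : Fin n → ℝ) i :=
    (Pi.single_nonneg.2 zero_le_one : (0 : Fin n → ℝ) ≤ Pi.single 0 1)
  (le_ciInf fun i => mul_nonneg (hw0 i) (hD i)).trans (iInf_le_Dbar hw0 (by simp))

theorem Dbar_mono [NeZero n] (h : ∀ i, D i ≤ D' i) : Dbar D ≤ Dbar D' :=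
  Dbar_le fun _ hw0 hw1 =>
    (ciInf_mono (Set.finite_range _).bddBelow fun i => mul_le_mul_of_nonneg_left (h i) (hw0 i)).trans
      (iInf_le_Dbar hw0 hw1)

theorem Dbar_const_mul_le [NeZero n] {c : ℝ} (hc : 0 ≤ c) : Dbar (fun i => c * D i) ≤ c * Dbar D :=
  Dbar_le fun w hw0 hw1 => by
    calc ⨅ i, w i * (c * D i) = c * ⨅ i, w i * D i := by
          rw [Real.mul_iInf_of_nonneg hc]; simp only [mul_left_comm]
      _ ≤ c * Dbar D := mul_le_mul_of_nonneg_left (iInf_le_Dbar hw0 hw1) hc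

theorem inv_iSup_mul_Dbar_le [NeZero n] {γ : Fin n → ℝ} (hγ : ∀ i, 0 < γ i) (hD : ∀ i, 0 ≤ D i)
    (h : ∀ i, (γ i)⁻¹ * D i ≤ D' i) : (⨆ i, γ i)⁻¹ * Dbar D ≤ Dbar D' := by
  have hγΓ : ∀ i, γ i ≤ ⨆ i, γ i := le_ciSup (Set.finite_range γ).bddAbove
  have hΓ : 0 < ⨆ i, γ i := (hγ 0).trans_le (hγΓ 0)
  have hD' : ∀ i, 0 ≤ D' i := fun i => (mul_nonneg (inv_nonneg.2 (hγ i).le) (hD i)).trans (h i)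
  have hDγ : ∀ i, D i ≤ (⨆ i, γ i) * D' i := fun i =>
    ((inv_mul_le_iff₀ (hγ i)).1 (h i)).trans (mul_le_mul_of_nonneg_right (hγΓ i) (hD' i))
  rw [inv_mul_le_iff₀ hΓ]
  exact (Dbar_mono hDγ).trans (Dbar_const_mul_le hΓ.le)

end Dbar

theorem max_div_half_le_two {b : ℝ} (hb : b ∈ Set.Icc (0 : ℝ) 1) :
    max (b / (1 / 2)) ((1 - b) / (1 - 1 / 2)) ≤ 2 := by
  obtain ⟨hb0, hb1⟩ := hb
  refine max_le ?_ ?_ <;> norm_num <;> linarith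

/-- If each player's β-constrained value satisfies
`Dp i ≥ max{β*ᵢ/βᵢ, (1−β*ᵢ)/(1−βᵢ)}⁻¹ · Dstar i`, then the multi-player max-min value
satisfies `Dbar Dp ≥ (maxᵢ max{β*ᵢ/βᵢ, (1−β*ᵢ)/(1−βᵢ)})⁻¹ · Dbar Dstar`; in particular
with `βᵢ = 1/2` for all `i`, the 1/2-Top-Two allocation is 2-competitive. -/
theorem stmt_15 {n : ℕ} [NeZero n] (β βstar Dp Dstar : Fin n → ℝ)
    (hβ : ∀ i, β i ∈ Set.Ioo (0 : ℝ) 1) (hβs : ∀ i, βstar i ∈ Set.Ioo (0 : ℝ) 1)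
    (hDs : ∀ i, 0 ≤ Dstar i)
    (hyp : ∀ i, (max (βstar i / β i) ((1 - βstar i) / (1 - β i)))⁻¹ * Dstar i ≤ Dp i) :
    (⨆ i, max (βstar i / β i) ((1 - βstar i) / (1 - β i)))⁻¹ * Dbar Dstar ≤ Dbar Dp ∧
    ((∀ i, β i = 1 / 2) → Dbar Dstar / 2 ≤ Dbar Dp) := by
  set γ : Fin n → ℝ := fun i => max (βstar i / β i) ((1 - βstar i) / (1 - β i))
  have hγ : ∀ i, 0 < γ i := fun i => lt_max_of_lt_left (div_pos (hβs i).1 (hβ i).1)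
  have hmain := inv_iSup_mul_Dbar_le hγ hDs hyp
  refine ⟨hmain, fun hhalf => ?_⟩
  have hΓ : ⨆ i, γ i ≤ 2 := ciSup_le fun i => by
    simpa only [γ, hhalf i] using max_div_half_le_two (Set.Ioo_subset_Icc_self (hβs i))
  have hΓpos : 0 < ⨆ i, γ i := (hγ 0).trans_le (le_ciSup (Set.finite_range γ).bddAbove 0)
  calc Dbar Dstar / 2 = 2⁻¹ * Dbar Dstar := by ring
    _ ≤ (⨆ i, γ i)⁻¹ * Dbar Dstar :=
        mul_le_mul_of_nonneg_right (inv_anti₀ hΓpos hΓ) (Dbar_nonneg hDs)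
    _ ≤ Dbar Dp := hmain
end

section
/- Suppose an algorithm's minimum empirical index at time N satisfies C̃(N) ≥ N/T* − C·N^{1−ξ} for all N ≥ T_stable, where T* > 0, C > 0, ξ ∈ (0,1) are constants and T_stable is a random time with finite expectation, and the algorithm stops at time τ_δ = inf{N : C̃(N) > β(N, δ)} with threshold β(N, δ) = log(1/δ) + c·log(1 + log N) for a constant c > 0. Then limsup_{δ→0} E[τ_δ]/log(1/δ) ≤ T*. -/
/-!
Fix `b > T*`. The sublinear terms `C N^{1-ξ}` and `c log(1 + log N)` are eventually at most
`(1/T* - 1/b) N`, say from `N₀` on, so from `T_stable + N₀` on the statistic exceeds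
`N/b + c log(1 + log N)`. Hence it crosses `β(N, δ)` no later than `T_stable + N₀ + b log(1/δ) + 1`,
and taking expectations gives `E[τ_δ] ≤ E[T_stable] + N₀ + 1 + b log(1/δ)`.
Dividing by `log(1/δ) → ∞` yields `limsup ≤ b`, for every `b > T*`.
-/

open MeasureTheory Filter Topology Asymptotics Real

lemma tendsto_log_one_div_nhdsGT_zero :
    Tendsto (fun δ : ℝ => log (1 / δ)) (𝓝[>] 0) atTop := by
  simpa only [one_div, Function.comp_def] using tendsto_log_atTop.comp tendsto_inv_nhdsGT_zero

lemma isLittleO_rpow_id_atTop {a : ℝ} (ha : a < 1) : (fun x : ℝ => x ^ a) =o[atTop] id := by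
  refine (isLittleO_iff_tendsto' ?_).mpr ?_
  · filter_upwards [eventually_ne_atTop 0] with x hx hx0 using absurd hx0 hx
  · refine (tendsto_rpow_neg_atTop (sub_pos.mpr ha)).congr' ?_
    filter_upwards [eventually_gt_atTop 0] with x hx
    rw [id, neg_sub, rpow_sub hx, rpow_one]

lemma isLittleO_log_one_add_log_id_atTop : (fun x : ℝ => log (1 + log x)) =o[atTop] id :=
  (isLittleO_log_id_atTop.comp_tendsto (tendsto_atTop_add_const_left _ 1 tendsto_log_atTop)).trans
    ((isLittleO_const_id_atTop 1).add isLittleO_log_id_atTop)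

lemma exists_forall_natCast_le_mul_of_isLittleO {f : ℝ → ℝ} (hf : f =o[atTop] id) {ε : ℝ}
    (hε : 0 < ε) : ∃ N₀ : ℕ, ∀ N ≥ N₀, f N ≤ ε * N := by
  obtain ⟨N₀, hN₀⟩ := eventually_atTop.mp (tendsto_natCast_atTop_atTop.eventually (hf.bound hε))
  refine ⟨N₀, fun N hN => ?_⟩
  have h := hN₀ N hN
  rw [norm_eq_abs, id, norm_natCast] at h
  exact (le_abs_self _).trans h

lemma sInf_crossing_le_of_linear_growth {Z g : ℕ → ℝ} {b L : ℝ} (hb : 0 < b) (hL : 0 ≤ L)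
    {M : ℕ} (hZ : ∀ N, M ≤ N → N / b + g N ≤ Z N) :
    ((sInf {N : ℕ | L + g N < Z N} : ℕ) : ℝ) ≤ M + b * L + 1 := by
  set K := max M (⌊b * L⌋₊ + 1)
  have hbL : b * L < K := by
    calc b * L < ⌊b * L⌋₊ + 1 := Nat.lt_floor_add_one _
      _ ≤ K := mod_cast le_max_right _ _
  have hK : L + g K < Z K := by
    have hL_lt : L < K / b := by rw [lt_div_iff₀ hb]; linarith
    linarith [hZ K (le_max_left _ _)]
  calc ((sInf {N : ℕ | L + g N < Z N} : ℕ) : ℝ) ≤ K := mod_cast Nat.sInf_le hK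
    _ ≤ M + ⌊b * L⌋₊ + 1 := by push_cast [K, Nat.cast_max]; exact max_le (by linarith) (by linarith)
    _ ≤ M + b * L + 1 := by linarith [Nat.floor_le (mul_nonneg hb.le hL)]

lemma integral_natCast_le_integral_add_const {Ω : Type*} {m0 : MeasurableSpace Ω} {μ : Measure Ω}
    [IsProbabilityMeasure μ] {τ T : Ω → ℕ} (hT : Integrable (fun ω => (T ω : ℝ)) μ) {K : ℝ}
    (h : ∀ ω, (τ ω : ℝ) ≤ T ω + K) :
    ∫ ω, (τ ω : ℝ) ∂μ ≤ (∫ ω, (T ω : ℝ) ∂μ) + K := by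
  calc ∫ ω, (τ ω : ℝ) ∂μ ≤ ∫ ω, ((T ω : ℝ) + K) ∂μ :=
        integral_mono_of_nonneg (.of_forall fun _ => Nat.cast_nonneg _)
          (hT.add (integrable_const K)) (.of_forall h)
    _ = (∫ ω, (T ω : ℝ) ∂μ) + K := by
        rw [integral_add hT (integrable_const K), integral_const, probReal_univ, one_smul]

lemma limsup_div_le_of_le_add_mul {α : Type*} {l : Filter α} [l.NeBot] {u L : α → ℝ} {A b : ℝ}
    (hL : Tendsto L l atTop) (hu₀ : ∀ᶠ x in l, 0 ≤ u x) (hu : ∀ᶠ x in l, u x ≤ A + b * L x) :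
    limsup (fun x => u x / L x) l ≤ b := by
  have hlim : Tendsto (fun x => A / L x + b) l (𝓝 b) := by
    simpa using (tendsto_const_nhds.div_atTop hL).add_const b
  have hle : ∀ᶠ x in l, u x / L x ≤ A / L x + b := by
    filter_upwards [hu, hL.eventually_gt_atTop 0] with x hux hLx
    rw [div_le_iff₀ hLx, add_mul, div_mul_cancel₀ _ hLx.ne']
    linarith
  have hcobdd : IsCoboundedUnder (· ≤ ·) l fun x => u x / L x := by
    refine isCoboundedUnder_le_of_eventually_le l (x := 0) ?_
    filter_upwards [hu₀, hL.eventually_gt_atTop 0] with x hux hLx using div_nonneg hux hLx.le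
  exact (limsup_le_limsup hle hcobdd hlim.isBoundedUnder_le).trans_eq hlim.limsup_eq

theorem stmt_19_general {Ω : Type*} {m0 : MeasurableSpace Ω} (μ : Measure Ω)
    [IsProbabilityMeasure μ]
    (Tstar Cc ξ c : ℝ) (hT : 0 < Tstar) (hξ : ξ ∈ Set.Ioo (0 : ℝ) 1)
    (Ctil : ℕ → Ω → ℝ) (Tstable : Ω → ℕ)
    (hTint : Integrable (fun ω => (Tstable ω : ℝ)) μ)
    (hlb : ∀ ω, ∀ N : ℕ, Tstable ω ≤ N →
      (N : ℝ) / Tstar - Cc * (N : ℝ) ^ (1 - ξ) ≤ Ctil N ω) :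
    Filter.limsup
      (fun δ : ℝ =>
        (∫ ω, ((sInf {N : ℕ |
            Real.log (1 / δ) + c * Real.log (1 + Real.log N) < Ctil N ω} : ℕ) : ℝ) ∂μ) /
          Real.log (1 / δ))
      (nhdsWithin 0 (Set.Ioi 0)) ≤ Tstar := by
  refine le_of_forall_gt_imp_ge_of_dense fun b hb => ?_
  have hb₀ : 0 < b := hT.trans hb
  have hε : 0 < Tstar⁻¹ - b⁻¹ := sub_pos.mpr (inv_strictAnti₀ hT hb)
  obtain ⟨N₀, hN₀⟩ := exists_forall_natCast_le_mul_of_isLittleO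
    (((isLittleO_rpow_id_atTop (sub_lt_self 1 hξ.1)).const_mul_left Cc).add
      (isLittleO_log_one_add_log_id_atTop.const_mul_left c)) hε
  refine limsup_div_le_of_le_add_mul (A := (∫ ω, (Tstable ω : ℝ) ∂μ) + N₀ + 1)
    tendsto_log_one_div_nhdsGT_zero
    (.of_forall fun δ => integral_nonneg fun ω => Nat.cast_nonneg _) ?_
  filter_upwards [Ioc_mem_nhdsGT one_pos] with δ hδ
  have hL : 0 ≤ log (1 / δ) := log_nonneg (one_le_one_div hδ.1 hδ.2)
  have hgrowth : ∀ ω, ∀ N, Tstable ω + N₀ ≤ N →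
      N / b + c * log (1 + log N) ≤ Ctil N ω := fun ω N hN => by
    have hslope : (N : ℝ) / Tstar - N / b = (Tstar⁻¹ - b⁻¹) * N := by ring
    linarith [hlb ω N (by omega), hN₀ N (by omega)]
  have hbound := integral_natCast_le_integral_add_const hTint fun ω =>
    (sInf_crossing_le_of_linear_growth hb₀ hL (hgrowth ω)).trans_eq
      (by push_cast; ring : _ = (Tstable ω : ℝ) + (N₀ + b * log (1 / δ) + 1))
  linarith

/-- Suppose the nondecreasing stopping statistic satisfies
`C̃(N) ≥ N/T* − C·N^{1−ξ}` for all `N ≥ T_stable` (a random time with finite expectation),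
and the algorithm stops at `τ_δ = inf{N : C̃(N) > β(N,δ)}` with
`β(N,δ) = log(1/δ) + c·log(1 + log N)`. Then `limsup_{δ→0⁺} E[τ_δ]/log(1/δ) ≤ T*`. -/
theorem stmt_19 {Ω : Type*} {m0 : MeasurableSpace Ω} (μ : Measure Ω)
    [IsProbabilityMeasure μ]
    (Tstar Cc ξ c : ℝ) (hT : 0 < Tstar) (hC : 0 < Cc) (hξ : ξ ∈ Set.Ioo (0 : ℝ) 1)
    (hc : 0 < c)
    (Ctil : ℕ → Ω → ℝ) (Tstable : Ω → ℕ)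
    (hmeas : ∀ N, Measurable (Ctil N)) (hTmeas : Measurable Tstable)
    (hTint : Integrable (fun ω => (Tstable ω : ℝ)) μ)
    (hmono : ∀ ω, Monotone fun N => Ctil N ω)
    (hlb : ∀ ω, ∀ N : ℕ, Tstable ω ≤ N →
      (N : ℝ) / Tstar - Cc * (N : ℝ) ^ (1 - ξ) ≤ Ctil N ω) :
    Filter.limsup
      (fun δ : ℝ =>
        (∫ ω, ((sInf {N : ℕ |
            Real.log (1 / δ) + c * Real.log (1 + Real.log N) < Ctil N ω} : ℕ) : ℝ) ∂μ) /
          Real.log (1 / δ))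
      (nhdsWithin 0 (Set.Ioi 0)) ≤ Tstar :=
  stmt_19_general (m0 := m0) μ Tstar Cc ξ c hT hξ Ctil Tstable hTint hlb
end
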